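/- There exists N0 ∈ ℕ such that for every integer N ≥ N0 the following holds. Let k = ⌊(10/216)·(N / ln N)⌋ and Q = Q([N]). Then there exists a blue/red coloring of Q which contains no blue copy of Λ and such that for every k-element subset Y ⊆ [N], there is a blue Y-shrub in Q (with respect to the partition [N] = ([N]\Y) ∪ Y). -/

import Mathlib

/-- With blue/red coloring `c` (blue = `true`, red = `false`) of the Boolean lattice on a
ground set partitioned into `X ∪ Y`, there is a red `X`-good copy of `Q(X)`: an embedding
`φ` of `Q(X)` with all images red and `φ(A) ∩ X = A` for all `A ⊆ X`. -/
def RedXGoodCopy {V : Type*} [DecidableEq V] (c : Finset V → Bool) (X : Finset V) : Prop :=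
  ∃ φ : Finset V → Finset V,
    (∀ A B : Finset V, A ⊆ X → B ⊆ X → (A ⊆ B ↔ φ A ⊆ φ B)) ∧
    (∀ A : Finset V, A ⊆ X → φ A ∩ X = A) ∧
    (∀ A : Finset V, A ⊆ X → c (φ A) = false)

/-- `S` is an ordered subset of `Y`: a sequence of distinct elements of `Y`
(a vertex of the factorial tree `O(Y)`, ordered by the prefix relation `<+:`). -/
def OrdSubset {V : Type*} (Y : Finset V) (S : List V) : Prop :=
  S.Nodup ∧ ∀ v ∈ S, v ∈ Y

/-- `τ` is a `Y`-good embedding of the factorial tree `O(Y)` into the Boolean lattice: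
for ordered subsets `S, T` of `Y`, `S` is a prefix of `T` iff `τ S ⊆ τ T`, and
`τ S ∩ Y` is the underlying set of `S`. Its image is a `Y`-shrub. -/
def IsShrubMap {V : Type*} [DecidableEq V] (Y : Finset V) (τ : List V → Finset V) : Prop :=
  (∀ S T : List V, OrdSubset Y S → OrdSubset Y T → (S <+: T ↔ τ S ⊆ τ T)) ∧
  (∀ S : List V, OrdSubset Y S → τ S ∩ Y = S.toFinset)

/-- `τ` determines a weak `Y`-shrub: `τ S ∩ Y` is the underlying set of `S` for every
ordered subset `S` of `Y`, and `τ S ⊊ τ T` whenever `S` is a strict prefix of `T`. -/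
def IsWeakShrubMap {V : Type*} [DecidableEq V] (Y : Finset V) (τ : List V → Finset V) : Prop :=
  (∀ S T : List V, OrdSubset Y S → OrdSubset Y T → S <+: T → S ≠ T → τ S ⊂ τ T) ∧
  (∀ S : List V, OrdSubset Y S → τ S ∩ Y = S.toFinset)

/-- There is a monochromatic blue `Y`-shrub (blue = `true`). -/
def BlueYShrub {V : Type*} [DecidableEq V] (c : Finset V → Bool) (Y : Finset V) : Prop :=
  ∃ τ : List V → Finset V, IsShrubMap Y τ ∧ ∀ S : List V, OrdSubset Y S → c (τ S) = true

/-- The coloring `c` admits no blue copy of the poset `Λ`: there are no blue vertices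
`A, B, C` with `A ⊂ C`, `B ⊂ C` and `A`, `B` incomparable. -/
def NoBlueLambda {V : Type*} (c : Finset V → Bool) : Prop :=
  ¬ ∃ A B C : Finset V, c A = true ∧ c B = true ∧ c C = true ∧
      A ⊂ C ∧ B ⊂ C ∧ ¬ A ⊆ B ∧ ¬ B ⊆ A

/-!
Fix, for every `k`-set `Y`, a map `τ_Y` on ordered subsets of `Y` and colour blue exactly the
sets `τ_Y(S)`. For `S = v :: r`, `τ_Y(S)` consists of the elements of `S`, a large set
`head(Y, v)` disjoint from `Y`, and for each position `i` of `r` a small marker encoding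
`(i, r[i])` by one point out of each of `s` pairs of spare points. The heads come from a binary
code (Gilbert–Varshamov counting): two distinct heads differ in more than `k + k s` points,
while the rest of a shrub vertex has at most `k + k s` points. Hence `τ_Y(S) ⊆ τ_{Y'}(T)` with
`S ≠ []` forces `Y = Y'` and equal first vertices, after which the markers force `S` to be a
prefix of `T`. Two blue sets below a common blue set are therefore prefixes of one sequence, so
they are comparable and there is no blue `Λ`. With `k ≈ (10/216) N / ln N` and
`s = ⌈log₂ N⌉`, the markers use `2 k s + k ≈ 0.13 N` points and the code fits into the
remaining pairs.
-/

open Finset Function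

section PairSelect

variable {α V : Type*} [Fintype α] [DecidableEq α] [DecidableEq V]

def pairSelect (π : α × Bool → V) (σ : Finset α) : Finset V :=
  univ.image fun a => π (a, a ∈ σ)

variable {π : α × Bool → V}

lemma mem_pairSelect {σ : Finset α} {x : V} : x ∈ pairSelect π σ ↔ ∃ a, π (a, a ∈ σ) = x := by
  simp [pairSelect]

lemma pairSelect_sdiff_pairSelect (hπ : Injective π) (σ τ : Finset α) :
    pairSelect π σ \ pairSelect π τ = (symmDiff σ τ).image fun a => π (a, a ∈ σ) := by
  ext x
  simp only [pairSelect, mem_sdiff, mem_image, mem_univ, true_and, mem_symmDiff, not_exists]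
  constructor
  · rintro ⟨⟨a, rfl⟩, hne⟩
    refine ⟨a, ?_, rfl⟩
    have := hne a
    by_cases ha : a ∈ σ <;> by_cases hb : a ∈ τ <;> simp_all
  · rintro ⟨a, ha, rfl⟩
    refine ⟨⟨a, rfl⟩, fun b hb => ?_⟩
    obtain ⟨rfl, hab⟩ := Prod.ext_iff.mp (hπ hb)
    by_cases h : b ∈ σ <;> simp_all

lemma card_pairSelect_sdiff_pairSelect (hπ : Injective π) (σ τ : Finset α) :
    #(pairSelect π σ \ pairSelect π τ) = #(symmDiff σ τ) := by
  rw [pairSelect_sdiff_pairSelect hπ, card_image_of_injective]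
  intro a b h
  exact (Prod.ext_iff.mp (hπ h)).1

lemma pairSelect_subset_pairSelect_iff (hπ : Injective π) {σ τ : Finset α} :
    pairSelect π σ ⊆ pairSelect π τ ↔ σ = τ := by
  rw [← sdiff_eq_empty_iff_subset, ← card_eq_zero, card_pairSelect_sdiff_pairSelect hπ,
    card_eq_zero]
  exact symmDiff_eq_bot

lemma card_pairSelect_le (π : α × Bool → V) (σ : Finset α) :
    #(pairSelect π σ) ≤ Fintype.card α :=
  card_image_le

lemma pairSelect_nonempty [Nonempty α] (π : α × Bool → V) (σ : Finset α) :
    (pairSelect π σ).Nonempty :=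
  univ_nonempty.image _

end PairSelect

section Codes

variable {α : Type*} [Fintype α]

lemma card_filter_card_le_mul_pow_le {b : ℕ} (hb : 0 < b) (r : ℕ) :
    #{t : Finset α | #t ≤ r} * b ^ Fintype.card α ≤ (1 + b) ^ Fintype.card α * b ^ r := by
  calc #{t : Finset α | #t ≤ r} * b ^ Fintype.card α
      = ∑ t ∈ ({t : Finset α | #t ≤ r} : Finset _), b ^ Fintype.card α := by
        rw [sum_const, smul_eq_mul]
    _ ≤ ∑ t ∈ ({t : Finset α | #t ≤ r} : Finset _), b ^ (Fintype.card α - #t) * b ^ r := by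
        refine sum_le_sum fun t ht => ?_
        calc b ^ Fintype.card α = b ^ (Fintype.card α - #t) * b ^ #t := by
                rw [← pow_add, Nat.sub_add_cancel (card_le_univ t)]
          _ ≤ b ^ (Fintype.card α - #t) * b ^ r :=
                Nat.mul_le_mul_left _ (Nat.pow_le_pow_right hb (mem_filter.mp ht).2)
    _ ≤ ∑ t : Finset α, b ^ (Fintype.card α - #t) * b ^ r :=
        sum_le_sum_of_subset (filter_subset _ _)
    _ = (1 + b) ^ Fintype.card α * b ^ r := by
        rw [← sum_mul, ← card_univ, ← sum_pow_mul_eq_add_pow 1 b univ, powerset_univ]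
        simp

variable [DecidableEq α]

lemma card_filter_card_symmDiff_le (a : Finset α) (r : ℕ) :
    #{t : Finset α | #(symmDiff a t) ≤ r} = #{t : Finset α | #t ≤ r} := by
  refine card_nbij' (symmDiff a) (symmDiff a) ?_ ?_ ?_ ?_ <;> intro t ht <;>
    simp_all [symmDiff_symmDiff_cancel_left]

/-- Gilbert–Varshamov: choose the words one at a time outside the radius-`r` balls around the
words already chosen. -/
lemma exists_map_lt_card_symmDiff {ι : Type*} [DecidableEq ι] (s : Finset ι) (r : ℕ)
    (hs : #s * #{t : Finset α | #t ≤ r} ≤ 2 ^ Fintype.card α) :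
    ∃ c : ι → Finset α, ∀ i ∈ s, ∀ j ∈ s, i ≠ j → r < #(symmDiff (c i) (c j)) := by
  induction s using Finset.induction_on with
  | empty => exact ⟨fun _ => ∅, by simp⟩
  | insert a s ha ih =>
    have hball : 0 < #{t : Finset α | #t ≤ r} := card_pos.mpr ⟨∅, by simp⟩
    rw [card_insert_of_notMem ha] at hs
    obtain ⟨c, hc⟩ := ih (le_trans (Nat.mul_le_mul_right _ (Nat.le_succ _)) hs)
    have hfar : #(s.biUnion fun j => ({t : Finset α | #(symmDiff (c j) t) ≤ r} : Finset _))
        < #(univ : Finset (Finset α)) := by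
      calc _ ≤ ∑ j ∈ s, #({t : Finset α | #(symmDiff (c j) t) ≤ r} : Finset _) :=
            card_biUnion_le
        _ = #s * #{t : Finset α | #t ≤ r} := by
          simp only [card_filter_card_symmDiff_le, sum_const, smul_eq_mul]
        _ < 2 ^ Fintype.card α := by nlinarith
        _ = _ := by rw [card_univ, Fintype.card_finset]
    obtain ⟨w, -, hw⟩ := exists_mem_notMem_of_card_lt_card hfar
    simp only [mem_biUnion, mem_filter, mem_univ, true_and, not_exists, not_and, not_le] at hw
    have hupd : ∀ j ∈ s, update c a w j = c j :=
      fun j hj => update_of_ne (ne_of_mem_of_not_mem hj ha) _ _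
    refine ⟨update c a w, fun i hi j hj hij => ?_⟩
    rcases mem_insert.mp hi with rfl | hi' <;> rcases mem_insert.mp hj with rfl | hj'
    · exact absurd rfl hij
    · rw [update_self, hupd j hj', symmDiff_comm]
      exact hw j hj'
    · rw [update_self, hupd i hi']
      exact hw i hi'
    · rw [hupd i hi', hupd j hj']
      exact hc i hi' j hj' hij

end Codes

lemma OrdSubset.length_le {V : Type*} [DecidableEq V] {Y : Finset V} {S : List V}
    (hS : OrdSubset Y S) : S.length ≤ #Y := by
  rw [← List.toFinset_card_of_nodup hS.1]
  exact card_le_card fun x hx => hS.2 x (List.mem_toFinset.mp hx)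

/-- The ingredients of the shrubs `τ_Y` for `k`-sets `Y`: `τ_Y (v :: r)` is built from the head
`head Y v` and the markers `marker Y i r[i]`. -/
structure ShrubData (V : Type*) [DecidableEq V] (k s : ℕ) where
  head : Finset V → V → Finset V
  marker : Finset V → ℕ → V → Finset V
  disjoint_head : ∀ Y v, Disjoint (head Y v) Y
  disjoint_marker : ∀ Y i v, #Y = k → Disjoint (marker Y i v) Y
  disjoint_marker_head : ∀ Y i v w, #Y = k → Disjoint (marker Y i v) (head Y w)
  disjoint_marker_marker : ∀ Y i j v w, i ≠ j → Disjoint (marker Y i v) (marker Y j w)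
  eq_of_marker_subset : ∀ Y i v w, i < k → marker Y i v ⊆ marker Y i w → v = w
  marker_nonempty : ∀ Y i v, i < k → (marker Y i v).Nonempty
  card_marker_le : ∀ Y i v, #(marker Y i v) ≤ s
  lt_card_head_sdiff : ∀ Y Y' v w, #Y = k → #Y' = k → (Y, v) ≠ (Y', w) →
    k + k * s < #(head Y v \ head Y' w)

namespace ShrubData

variable {V : Type*} [DecidableEq V] {k s : ℕ} (D : ShrubData V k s) {Y Y' : Finset V}

def markers (Y : Finset V) : ℕ → List V → Finset V
  | _, [] => ∅
  | i, a :: r => D.marker Y i a ∪ markers Y (i + 1) r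

def shrub (Y : Finset V) : List V → Finset V
  | [] => ∅
  | v :: r => (v :: r).toFinset ∪ D.head Y v ∪ D.markers Y 0 r

lemma markers_mono {i : ℕ} {r r' : List V} (h : r <+: r') :
    D.markers Y i r ⊆ D.markers Y i r' := by
  induction r generalizing i r' with
  | nil => simp [markers]
  | cons a r ih =>
    obtain ⟨b, r', rfl⟩ := List.exists_cons_of_ne_nil (show r' ≠ [] by rintro rfl; simp at h)
    obtain ⟨rfl, hrr⟩ := List.cons_prefix_cons.mp h
    exact union_subset_union subset_rfl (ih hrr)

lemma shrub_mono {S T : List V} (h : S <+: T) : D.shrub Y S ⊆ D.shrub Y T := by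
  cases S with
  | nil => simp [shrub]
  | cons v r =>
    obtain ⟨w, T, rfl⟩ := List.exists_cons_of_ne_nil (show T ≠ [] by rintro rfl; simp at h)
    obtain ⟨rfl, hrT⟩ := List.cons_prefix_cons.mp h
    refine union_subset_union (union_subset_union ?_ subset_rfl) (D.markers_mono hrT)
    exact fun x hx => List.mem_toFinset.mpr (h.subset (List.mem_toFinset.mp hx))

lemma card_markers_le (i : ℕ) (r : List V) : #(D.markers Y i r) ≤ r.length * s := by
  induction r generalizing i with
  | nil => simp [markers]
  | cons a r ih =>
    calc #(D.markers Y i (a :: r)) ≤ #(D.marker Y i a) + #(D.markers Y (i + 1) r) :=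
          card_union_le _ _
      _ ≤ s + r.length * s := Nat.add_le_add (D.card_marker_le _ _ _) (ih _)
      _ = (a :: r).length * s := by simp only [List.length_cons]; ring

lemma disjoint_markers (hY : #Y = k) (i : ℕ) (r : List V) : Disjoint (D.markers Y i r) Y := by
  induction r generalizing i with
  | nil => simp [markers]
  | cons a r ih => exact disjoint_union_left.mpr ⟨D.disjoint_marker _ _ _ hY, ih _⟩

lemma disjoint_markers_head (hY : #Y = k) (i : ℕ) (r : List V) (w : V) :
    Disjoint (D.markers Y i r) (D.head Y w) := by
  induction r generalizing i with
  | nil => simp [markers]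
  | cons a r ih => exact disjoint_union_left.mpr ⟨D.disjoint_marker_head _ _ _ _ hY, ih _⟩

lemma disjoint_marker_markers {i j : ℕ} (hij : i < j) (a : V) (r : List V) :
    Disjoint (D.marker Y i a) (D.markers Y j r) := by
  induction r generalizing j with
  | nil => simp [markers]
  | cons b r ih =>
    exact disjoint_union_right.mpr ⟨D.disjoint_marker_marker _ _ _ _ _ hij.ne, ih (by omega)⟩

lemma prefix_of_markers_subset {i : ℕ} {r r' : List V} (hr : i + r.length ≤ k)
    (h : D.markers Y i r ⊆ D.markers Y i r') : r <+: r' := by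
  induction r generalizing i r' with
  | nil => exact List.nil_prefix
  | cons a r ih =>
    simp only [List.length_cons] at hr
    cases r' with
    | nil =>
      obtain ⟨x, hx⟩ := D.marker_nonempty Y i a (by omega)
      simpa [markers] using h (mem_union_left _ hx)
    | cons b r' =>
      simp only [markers, union_subset_iff] at h
      obtain rfl : a = b := D.eq_of_marker_subset Y i a b (by omega) <|
        Disjoint.left_le_of_le_sup_right h.1 (D.disjoint_marker_markers (Nat.lt_succ_self i) a r')
      refine List.cons_prefix_cons.mpr ⟨rfl, ih (i := i + 1) (by omega) ?_⟩
      exact Disjoint.left_le_of_le_sup_left h.2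
        (D.disjoint_marker_markers (Nat.lt_succ_self i) a r).symm

lemma shrub_inter (hY : #Y = k) {S : List V} (hS : OrdSubset Y S) :
    D.shrub Y S ∩ Y = S.toFinset := by
  cases S with
  | nil => simp [shrub]
  | cons v r =>
    simp only [shrub, union_inter_distrib_right,
      disjoint_iff_inter_eq_empty.mp (D.disjoint_head Y v),
      disjoint_iff_inter_eq_empty.mp (D.disjoint_markers hY 0 r), union_empty]
    exact inter_eq_left.mpr fun x hx => hS.2 x (List.mem_toFinset.mp hx)

/-- Outside the heads a shrub vertex has at most `k + k * s` points, fewer than the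
difference of two distinct heads. -/
lemma eq_and_prefix_of_shrub_subset (hY : #Y = k) (hY' : #Y' = k) {S T : List V}
    (hS : OrdSubset Y S) (hT : OrdSubset Y' T) (hS0 : S ≠ [])
    (h : D.shrub Y S ⊆ D.shrub Y' T) : Y = Y' ∧ S <+: T := by
  obtain ⟨v, r, rfl⟩ := List.exists_cons_of_ne_nil hS0
  cases T with
  | nil => simpa [shrub] using h (by simp [shrub] : v ∈ D.shrub Y (v :: r))
  | cons w r' =>
    have hT' := hT.length_le
    have hS' := hS.length_le
    simp only [List.length_cons] at hT' hS'
    have hhead : D.head Y v \ D.head Y' w ⊆ (w :: r').toFinset ∪ D.markers Y' 0 r' := by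
      intro x hx
      have hxT := h (mem_union_left _ (mem_union_right _ (mem_sdiff.mp hx).1))
      simp only [shrub, mem_union] at hxT ⊢
      rcases hxT with (hxT | hxT) | hxT
      · exact Or.inl hxT
      · exact absurd hxT (mem_sdiff.mp hx).2
      · exact Or.inr hxT
    obtain ⟨rfl, rfl⟩ : Y = Y' ∧ v = w := by
      rw [← Prod.mk.injEq]
      by_contra hne
      have := (card_le_card hhead).trans (card_union_le _ _)
      have := D.card_markers_le (Y := Y') 0 r'
      have := List.toFinset_card_le (w :: r')
      have := Nat.mul_le_mul_right s (show r'.length ≤ k by omega)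
      have := D.lt_card_head_sdiff Y Y' v w hY hY' hne
      simp only [List.length_cons] at *
      omega
    refine ⟨rfl, List.cons_prefix_cons.mpr ⟨rfl, ?_⟩⟩
    refine D.prefix_of_markers_subset (Y := Y) (i := 0) (by omega) fun x hx => ?_
    have hxT := h (mem_union_right _ hx)
    simp only [shrub, mem_union] at hxT
    rcases hxT with (hxT | hxT) | hxT
    · exact absurd (hT.2 x (List.mem_toFinset.mp hxT))
        (disjoint_left.mp (D.disjoint_markers hY 0 r) hx)
    · exact absurd hxT (disjoint_left.mp (D.disjoint_markers_head hY 0 r v) hx)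
    · exact hxT

lemma prefix_of_shrub_subset (hY : #Y = k) {S T : List V} (hS : OrdSubset Y S)
    (hT : OrdSubset Y T) (h : D.shrub Y S ⊆ D.shrub Y T) : S <+: T := by
  rcases eq_or_ne S [] with rfl | hS0
  · exact List.nil_prefix
  · exact (D.eq_and_prefix_of_shrub_subset hY hY hS hT hS0 h).2

def IsBlue (A : Finset V) : Prop :=
  ∃ Y : Finset V, #Y = k ∧ ∃ S : List V, OrdSubset Y S ∧ A = D.shrub Y S

open Classical in
noncomputable def coloring (A : Finset V) : Bool := decide (D.IsBlue A)

lemma coloring_eq_true {A : Finset V} : D.coloring A = true ↔ D.IsBlue A := by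
  simp [coloring]

theorem noBlueLambda_coloring : NoBlueLambda D.coloring := by
  rintro ⟨A, B, C, hA, hB, hC, hAC, hBC, hAB, hBA⟩
  obtain ⟨Y₁, hY₁, S₁, hS₁, rfl⟩ := D.coloring_eq_true.mp hA
  obtain ⟨Y₂, hY₂, S₂, hS₂, rfl⟩ := D.coloring_eq_true.mp hB
  obtain ⟨Y, hY, U, hU, rfl⟩ := D.coloring_eq_true.mp hC
  have hS₁0 : S₁ ≠ [] := by rintro rfl; exact hAB (by simp [shrub])
  have hS₂0 : S₂ ≠ [] := by rintro rfl; exact hBA (by simp [shrub])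
  obtain ⟨rfl, h₁⟩ := D.eq_and_prefix_of_shrub_subset hY₁ hY hS₁ hU hS₁0 hAC.subset
  obtain ⟨rfl, h₂⟩ := D.eq_and_prefix_of_shrub_subset hY₂ hY hS₂ hU hS₂0 hBC.subset
  rcases List.prefix_or_prefix_of_prefix h₁ h₂ with h | h
  · exact hAB (D.shrub_mono h)
  · exact hBA (D.shrub_mono h)

theorem blueYShrub_coloring (hY : #Y = k) : BlueYShrub D.coloring Y :=
  ⟨D.shrub Y, ⟨fun _ _ hS hT => ⟨D.shrub_mono, D.prefix_of_shrub_subset hY hS hT⟩,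
    fun _ hS => D.shrub_inter hY hS⟩,
    fun S hS => D.coloring_eq_true.mpr ⟨Y, hY, S, hS, rfl⟩⟩

end ShrubData

section Construction

variable {V : Type*} [DecidableEq V] {k s m : ℕ}

def levelMarker (ι : (Fin k × Fin s) × Bool → V) (β : V → Finset (Fin s)) (i : ℕ) (v : V) :
    Finset V :=
  if h : i < k then pairSelect (fun p => ι ((⟨i, h⟩, p.1), p.2)) (β v) else ∅

variable {ι : (Fin k × Fin s) × Bool → V} {β : V → Finset (Fin s)}

lemma exists_eq_of_mem_levelMarker {i : ℕ} {v y : V} (hy : y ∈ levelMarker ι β i v) :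
    ∃ x, ι x = y := by
  unfold levelMarker at hy
  split_ifs at hy
  · obtain ⟨a, rfl⟩ := mem_pairSelect.mp hy
    exact ⟨_, rfl⟩
  · simp at hy

lemma disjoint_levelMarker (hι : Injective ι) {i j : ℕ} (hij : i ≠ j) (v w : V) :
    Disjoint (levelMarker ι β i v) (levelMarker ι β j w) := by
  unfold levelMarker
  split_ifs with hi hj
  · refine disjoint_left.mpr fun y hy hy' => hij ?_
    obtain ⟨a, rfl⟩ := mem_pairSelect.mp hy
    obtain ⟨b, hb⟩ := mem_pairSelect.mp hy'
    have := hι hb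
    simp only [Prod.mk.injEq, Fin.mk.injEq] at this
    exact this.1.1.symm
  all_goals simp

lemma eq_of_levelMarker_subset (hι : Injective ι) (hβ : Injective β) {i : ℕ} (hi : i < k)
    {v w : V} (h : levelMarker ι β i v ⊆ levelMarker ι β i w) : v = w := by
  simp only [levelMarker, hi, dif_pos] at h
  refine hβ ((pairSelect_subset_pairSelect_iff fun p q hpq => ?_).mp h)
  have := hι hpq
  simp only [Prod.mk.injEq] at this
  exact Prod.ext this.1.2 this.2

lemma levelMarker_nonempty (hs : 0 < s) {i : ℕ} (hi : i < k) (v : V) :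
    (levelMarker ι β i v).Nonempty := by
  have : Nonempty (Fin s) := ⟨⟨0, hs⟩⟩
  simp only [levelMarker, hi, dif_pos]
  exact pairSelect_nonempty _ _

lemma card_levelMarker_le (i : ℕ) (v : V) : #(levelMarker ι β i v) ≤ s := by
  unfold levelMarker
  split_ifs
  · simpa using card_pairSelect_le _ (β v)
  · simp

def ShrubData.ofCode (β : V ↪ Finset (Fin s)) (π : Fin m × Bool ↪ V)
    (ι : Finset V → ((Fin k × Fin s) × Bool ↪ V)) (code : Finset V × V → Finset (Fin m))
    (hs : 0 < s) (hι : ∀ Y, #Y = k → ∀ x, ι Y x ∉ Y ∧ ι Y x ∉ Set.range π)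
    (hcode : ∀ p q : Finset V × V, #p.1 = k → #q.1 = k → p ≠ q →
      k * (s + 2) < #(symmDiff (code p) (code q))) :
    ShrubData V k s where
  head Y v := pairSelect π (code (Y, v)) \ Y
  marker Y := levelMarker (ι Y) β
  disjoint_head _ _ := sdiff_disjoint
  disjoint_marker Y _ _ hY := disjoint_left.mpr fun y hy hyY => by
    obtain ⟨x, rfl⟩ := exists_eq_of_mem_levelMarker hy
    exact (hι Y hY x).1 hyY
  disjoint_marker_head Y _ _ _ hY := disjoint_left.mpr fun y hy hyh => by
    obtain ⟨x, rfl⟩ := exists_eq_of_mem_levelMarker hy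
    obtain ⟨a, ha⟩ := mem_pairSelect.mp (mem_sdiff.mp hyh).1
    exact (hι Y hY x).2 ⟨_, ha⟩
  disjoint_marker_marker Y _ _ v w hij := disjoint_levelMarker (ι Y).injective hij v w
  eq_of_marker_subset Y _ _ _ hi h := eq_of_levelMarker_subset (ι Y).injective β.injective hi h
  marker_nonempty _ _ v hi := levelMarker_nonempty hs hi v
  card_marker_le _ i v := card_levelMarker_le i v
  lt_card_head_sdiff Y Y' v w hY hY' hne := by
    have hsub : pairSelect π (code (Y, v)) \ pairSelect π (code (Y', w)) ⊆
        (pairSelect π (code (Y, v)) \ Y) \ (pairSelect π (code (Y', w)) \ Y') ∪ Y := by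
      intro x hx
      simp only [mem_sdiff, mem_union] at hx ⊢
      tauto
    have h1 := (card_le_card hsub).trans (card_union_le _ _)
    rw [card_pairSelect_sdiff_pairSelect π.injective] at h1
    have h2 := hcode (Y, v) (Y', w) hY hY' hne
    have h3 : k * (s + 2) = k + k * s + k := by ring
    omega

end Construction

lemma exists_embedding_forall_notMem {α V : Type*} [Fintype α] [Fintype V] [DecidableEq V]
    (A : Finset V) (h : Fintype.card α + #A ≤ Fintype.card V) : ∃ e : α ↪ V, ∀ x, e x ∉ A := by
  obtain ⟨e⟩ := Function.Embedding.nonempty_of_card_le (α := α) (β := ↥(Aᶜ))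
    (by rw [Fintype.card_coe, card_compl]; omega)
  exact ⟨e.trans (Embedding.subtype _), fun x => mem_compl.mp (e x).2⟩

lemma exists_code_of_le {V : Type*} [Fintype V] [DecidableEq V] {k m r : ℕ}
    (h : Fintype.card V ^ (k + 1) * 9 ^ m * 8 ^ r ≤ 16 ^ m) :
    ∃ code : Finset V × V → Finset (Fin m), ∀ p q : Finset V × V, #p.1 = k → #q.1 = k →
      p ≠ q → r < #(symmDiff (code p) (code q)) := by
  have hball := card_filter_card_le_mul_pow_le (α := Fin m) (by norm_num : 0 < 8) r
  rw [Fintype.card_fin] at hball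
  have hI : #(powersetCard k (univ : Finset V) ×ˢ (univ : Finset V)) ≤
      Fintype.card V ^ (k + 1) := by
    rw [card_product, card_powersetCard, card_univ, pow_succ]
    exact Nat.mul_le_mul_right _ (Nat.choose_le_pow _ _)
  obtain ⟨code, hcode⟩ := exists_map_lt_card_symmDiff
    (powersetCard k (univ : Finset V) ×ˢ (univ : Finset V)) r <| by
      rw [Fintype.card_fin]
      refine Nat.le_of_mul_le_mul_right ?_ (by positivity : 0 < 8 ^ m)
      calc _ ≤ Fintype.card V ^ (k + 1) * (#{t : Finset (Fin m) | #t ≤ r} * 8 ^ m) := by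
            rw [← mul_assoc]; exact Nat.mul_le_mul_right _ (Nat.mul_le_mul_right _ hI)
        _ ≤ Fintype.card V ^ (k + 1) * (9 ^ m * 8 ^ r) := Nat.mul_le_mul_left _ hball
        _ ≤ 16 ^ m := by rw [← mul_assoc]; exact h
        _ = 2 ^ m * 8 ^ m := by rw [← mul_pow]; norm_num
  refine ⟨code, fun p q hp hq hpq => hcode p ?_ q ?_ hpq⟩ <;>
    simpa [mem_product, mem_powersetCard]

theorem ShrubData.nonempty_of_le {V : Type*} [Fintype V] [DecidableEq V] {k s m : ℕ}
    (hs : 0 < s) (hV : Fintype.card V ≤ 2 ^ s) (hroom : 2 * k * s + k + 2 * m ≤ Fintype.card V)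
    (hcount : Fintype.card V ^ (k + 1) * 9 ^ m * 8 ^ (k * (s + 2)) ≤ 16 ^ m) :
    Nonempty (ShrubData V k s) := by
  obtain ⟨β⟩ : Nonempty (V ↪ Finset (Fin s)) :=
    Function.Embedding.nonempty_of_card_le (by simpa [Fintype.card_finset] using hV)
  obtain ⟨π⟩ : Nonempty (Fin m × Bool ↪ V) :=
    Function.Embedding.nonempty_of_card_le (by simp; omega)
  have hι : ∀ Y : Finset V, ∃ e : (Fin k × Fin s) × Bool ↪ V,
      #Y = k → ∀ x, e x ∉ Y ∧ e x ∉ Set.range π := by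
    intro Y
    by_cases hY : #Y = k
    · obtain ⟨e, he⟩ := exists_embedding_forall_notMem (α := (Fin k × Fin s) × Bool)
          (Y ∪ univ.map π) <| by
        have := card_union_le Y (univ.map π)
        simp only [card_map, card_univ, Fintype.card_prod, Fintype.card_fin,
          Fintype.card_bool] at this ⊢
        nlinarith
      refine ⟨e, fun _ x => ?_⟩
      simpa [not_or] using he x
    · obtain ⟨e, -⟩ := exists_embedding_forall_notMem (α := (Fin k × Fin s) × Bool) ∅ <| by
        simp only [card_empty, Fintype.card_prod, Fintype.card_fin, Fintype.card_bool]
        nlinarith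
      exact ⟨e, fun h => absurd h hY⟩
  choose ι hι using hι
  obtain ⟨code, hcode⟩ := exists_code_of_le (k := k) hcount
  exact ⟨ShrubData.ofCode β π ι code hs hι hcode⟩

section Estimates

open Real

lemma log_le_div_add (x : ℝ) (hx : 0 < x) : log x ≤ x / 100 + 98 := by
  have h1 := log_le_sub_one_of_pos (by positivity : 0 < x / 100)
  have h2 := log_le_sub_one_of_pos (by norm_num : (0 : ℝ) < 100)
  rw [log_div hx.ne' (by norm_num)] at h1
  linarith

lemma log_nine_le : log 9 ≤ 16 / 5 * log 2 := by
  have h := log_le_log (by norm_num) (show (9 : ℝ) ^ 5 ≤ 2 ^ 16 by norm_num)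
  rw [log_pow, log_pow] at h
  push_cast at h
  linarith

lemma twenty_le_log {N : ℕ} (hN : 2 ^ 30 ≤ N) : 20 ≤ log N := by
  have h := log_le_log (by positivity) (show ((2 ^ 30 : ℕ) : ℝ) ≤ N by exact_mod_cast hN)
  rw [Nat.cast_pow, log_pow] at h
  have := log_two_gt_d9
  push_cast at h
  linarith

lemma clog_mul_log_two_lt {N : ℕ} (hN : 1 < N) :
    (Nat.clog 2 N : ℝ) * log 2 < log N + log 2 := by
  have hpos := Nat.clog_pos one_lt_two hN
  have h : ((2 ^ (Nat.clog 2 N - 1) : ℕ) : ℝ) < N := by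
    exact_mod_cast Nat.pow_pred_clog_lt_self one_lt_two hN
  have := log_lt_log (by positivity) h
  rw [Nat.cast_pow, log_pow, Nat.cast_sub hpos] at this
  push_cast at this
  linarith

lemma floor_mul_div_mul_le {c x y : ℝ} (hc : 0 ≤ c) (hx : 0 ≤ x) (hy : 0 ≤ y) :
    (⌊c * (x / y)⌋₊ : ℝ) * y ≤ c * x := by
  rcases hy.eq_or_lt with rfl | hy
  · simpa using mul_nonneg hc hx
  · calc (⌊c * (x / y)⌋₊ : ℝ) * y ≤ c * (x / y) * y :=
          mul_le_mul_of_nonneg_right (Nat.floor_le (by positivity)) hy.le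
      _ = c * x := by field_simp

variable {N k s m : ℕ} (hN : 2 ^ 30 ≤ N) (hk : k * log N ≤ 10 / 216 * N)
  (hs : s * log 2 < log N + log 2)
include hN hk hs

lemma two_mul_mul_add_le : 2 * k * s + k ≤ N := by
  have hL := twenty_le_log hN
  have hl := log_two_gt_d9
  have hk0 : (0 : ℝ) ≤ k := k.cast_nonneg
  have hks : (k : ℝ) * (s * log 2) ≤ k * (log N + log 2) := mul_le_mul_of_nonneg_left hs.le hk0
  have hk20 : (k : ℝ) * 20 ≤ 10 / 216 * N := by nlinarith
  have : (2 * k * s + k : ℝ) ≤ N := by nlinarith [log_two_lt_d9]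
  exact_mod_cast this

lemma pow_mul_pow_mul_pow_le (hm : N ≤ 2 * k * s + k + 2 * m + 1) :
    N ^ (k + 1) * 9 ^ m * 8 ^ (k * (s + 2)) ≤ 16 ^ m := by
  have hNpos : (0 : ℝ) < N := Nat.cast_pos.mpr (lt_of_lt_of_le (by norm_num) hN)
  have hNbig : (2 : ℝ) ^ 30 ≤ N := by exact_mod_cast hN
  have hL := twenty_le_log hN
  have hL' := log_le_div_add N hNpos
  have hl := log_two_gt_d9
  have hl' := log_two_lt_d9
  have hl0 : (0 : ℝ) ≤ log 2 := hl.le.trans' (by norm_num)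
  have hk0 : (0 : ℝ) ≤ k := k.cast_nonneg
  have hks : (k : ℝ) * (s * log 2) ≤ k * (log N + log 2) := mul_le_mul_of_nonneg_left hs.le hk0
  have hk20 : (k : ℝ) * 20 ≤ 10 / 216 * N := by nlinarith
  have hkl : (k : ℝ) * log 2 ≤ k * 0.6931471808 := mul_le_mul_of_nonneg_left hl'.le hk0
  have hml : (m : ℝ) * log 9 ≤ m * (16 / 5 * log 2) :=
    mul_le_mul_of_nonneg_left log_nine_le m.cast_nonneg
  have hmℓ := mul_le_mul_of_nonneg_right (show (N : ℝ) ≤ 2 * k * s + k + 2 * m + 1 by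
    exact_mod_cast hm) hl0
  have hNℓ : (N : ℝ) * 0.6931471803 ≤ N * log 2 := mul_le_mul_of_nonneg_left hl.le hNpos.le
  have hlog : ((k : ℝ) + 1) * log N + m * log 9 + (k * (s + 2)) * (3 * log 2) ≤
      m * (4 * log 2) := by
    linarith
  have : ((N ^ (k + 1) * 9 ^ m * 8 ^ (k * (s + 2)) : ℕ) : ℝ) ≤ ((16 ^ m : ℕ) : ℝ) := by
    push_cast
    rw [← log_le_log_iff (by positivity) (by positivity), log_mul (by positivity) (by positivity),
      log_mul (by positivity) (by positivity), log_pow, log_pow, log_pow, log_pow,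
      show (8 : ℝ) = 2 ^ 3 by norm_num, show (16 : ℝ) = 2 ^ 4 by norm_num, log_pow, log_pow]
    push_cast
    linarith
  exact_mod_cast this

end Estimates

/-- There is `N0` such that for all `N ≥ N0`, with
`k = ⌊(10/216) · N / ln N⌋`, there is a blue/red coloring of `Q([N])` with no blue copy
of `Λ` such that for every `k`-element subset `Y ⊆ [N]` there is a blue `Y`-shrub. -/
theorem statement19 :
    ∃ N0 : ℕ, ∀ N : ℕ, N ≥ N0 →
      ∃ c : Finset (Fin N) → Bool,
        NoBlueLambda c ∧
        ∀ Y : Finset (Fin N),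
          Y.card = ⌊(10 / 216 : ℝ) * (N / Real.log N)⌋₊ → BlueYShrub c Y := by
  refine ⟨2 ^ 30, fun N hN => ?_⟩
  set k := ⌊(10 / 216 : ℝ) * (N / Real.log N)⌋₊
  set s := Nat.clog 2 N
  have hN1 : 1 < N := lt_of_lt_of_le (by norm_num) hN
  have hk : (k : ℝ) * Real.log N ≤ 10 / 216 * N :=
    floor_mul_div_mul_le (by norm_num) N.cast_nonneg (Real.log_natCast_nonneg N)
  have hs : (s : ℝ) * Real.log 2 < Real.log N + Real.log 2 := clog_mul_log_two_lt hN1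
  have hroom : 2 * k * s + k ≤ N := two_mul_mul_add_le hN hk hs
  obtain ⟨D⟩ := ShrubData.nonempty_of_le (V := Fin N) (k := k) (s := s)
    (m := (N - 2 * k * s - k) / 2)
    (Nat.clog_pos one_lt_two hN1) (by simpa using Nat.le_pow_clog one_lt_two N)
    (by simp only [Fintype.card_fin]; omega)
    (by simpa using pow_mul_pow_mul_pow_le hN hk hs (by omega))
  exact ⟨D.coloring, D.noBlueLambda_coloring, fun Y hY => D.blueYShrub_coloring hY⟩
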